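/- Let S = {1,…,N} be a finite set and let a₁, α : S → ℝ with a₁(i) > 0 for all i. Let μ be a probability measure on S with ∑_{i∈S} μ(i)·(a₁(i) − α(i)²/2) > 0. Then there exist ε > 0 and r₀ > 0 such that ∑_{i∈S} μ(i)·(a₁(i) − α(i)²/2 − ε) > 0 and for every i ∈ S: (i) for all x > r₀, 2·(a₁(i) − α(i)²/2 − b₁(i)·e^x + α(i)²/(2x))·x ≤ −2·(a₁(i) − α(i)²/2 − ε)·|x|, and (ii) for all x < −r₀, 2·(a₁(i) − α(i)²/2 − b₁(i)·e^x + α(i)²/(2x))·x ≤ −2·(a₁(i) − α(i)²/2 − ε)·|x|, where b₁ : S → (0,∞). -/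

import Mathlib

/-!
Multiplying the drift by `x` gives `2 β x - 2 b x eˣ + α²`. As `x → +∞` the term `-2 b x eˣ`
dominates every linear function of `x`, and as `x → -∞` the term `x eˣ` stays bounded while
`-2 ε |x|` leaves room for the constant `α²`; so for any `ε > 0` the estimate holds outside a
compact interval, uniformly over the finitely many regimes. The mean condition survives a small
enough shift `ε` by continuity.
-/

open Real Finset Filter Topology

theorem Finset.exists_pos_sum_mul_sub_pos {ι : Type*} (s : Finset ι) (μ β : ι → ℝ)
    (h : 0 < ∑ i ∈ s, μ i * β i) : ∃ ε > 0, 0 < ∑ i ∈ s, μ i * (β i - ε) := by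
  have hcont : Continuous fun ε : ℝ => ∑ i ∈ s, μ i * (β i - ε) := by fun_prop
  have hpos : ∀ᶠ ε in 𝓝 (0 : ℝ), 0 < ∑ i ∈ s, μ i * (β i - ε) :=
    hcont.continuousAt.eventually (lt_mem_nhds (by simpa using h))
  obtain ⟨ε, hε, hε'⟩ :=
    ((hpos.filter_mono nhdsWithin_le_nhds).and (self_mem_nhdsWithin (s := Set.Ioi 0))).exists
  exact ⟨ε, hε', hε⟩

section LogisticDrift

variable {β α b x : ℝ}

theorem logisticDrift_mul_eq (hx : x ≠ 0) :
    2 * (β - b * exp x + α ^ 2 / (2 * x)) * x = 2 * β * x - 2 * b * x * exp x + α ^ 2 := by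
  field_simp

variable (β α ε : ℝ)

theorem eventually_logisticDrift_le_atTop (hb : 0 < b) :
    ∀ᶠ x in atTop, 2 * (β - b * exp x + α ^ 2 / (2 * x)) * x ≤ -2 * (β - ε) * |x| := by
  set C := |4 * β - 2 * ε| + α ^ 2
  filter_upwards [eventually_ge_atTop 1, eventually_ge_atTop (C / (2 * b))] with x hx1 hxC
  have hx : 0 < x := by linarith
  have hC : C ≤ 2 * b * x := (div_le_iff₀' (by positivity)).1 hxC
  have hexp : x ≤ exp x := by linarith [add_one_le_exp x]
  rw [logisticDrift_mul_eq hx.ne', abs_of_pos hx]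
  have hgrowth : C * x ≤ 2 * b * x * exp x :=
    calc C * x ≤ 2 * b * x * x := by gcongr
      _ ≤ 2 * b * x * exp x := by gcongr
  have hα : α ^ 2 ≤ α ^ 2 * x := le_mul_of_one_le_right (sq_nonneg α) hx1
  nlinarith [le_abs_self (4 * β - 2 * ε)]

theorem eventually_logisticDrift_le_atBot (hε : 0 < ε) :
    ∀ᶠ x in atBot, 2 * (β - b * exp x + α ^ 2 / (2 * x)) * x ≤ -2 * (β - ε) * |x| := by
  set C := 2 * |b| + α ^ 2
  filter_upwards [eventually_lt_atBot 0, eventually_le_atBot (-(C / (2 * ε)))] with x hx hxC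
  have hC : C ≤ 2 * ε * -x := (div_le_iff₀' (by positivity)).1 (le_neg_of_le_neg hxC)
  have hxexp : -x * exp x ≤ 1 := by
    have := mul_exp_neg_le_exp_neg_one (-x)
    rw [neg_neg] at this
    linarith [exp_le_one_iff.2 (by norm_num : (-1 : ℝ) ≤ 0)]
  have hbexp : b * (-x * exp x) ≤ |b| := by
    calc b * (-x * exp x) ≤ |b| * (-x * exp x) :=
          mul_le_mul_of_nonneg_right (le_abs_self b) (by nlinarith [exp_pos x])
      _ ≤ |b| := mul_le_of_le_one_right (abs_nonneg b) hxexp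
  rw [logisticDrift_mul_eq hx.ne, abs_of_neg hx]
  nlinarith

end LogisticDrift

theorem exists_pos_forall_of_eventually_atTop_atBot {P Q : ℝ → Prop}
    (hP : ∀ᶠ x in atTop, P x) (hQ : ∀ᶠ x in atBot, Q x) :
    ∃ r > 0, (∀ x > r, P x) ∧ (∀ x < -r, Q x) := by
  obtain ⟨a, ha⟩ := eventually_atTop.1 hP
  obtain ⟨c, hc⟩ := eventually_atBot.1 hQ
  refine ⟨max 1 (max a (-c)), by positivity, fun x hx => ha x ?_, fun x hx => hc x ?_⟩
  · linarith [le_max_left a (-c), le_max_right 1 (max a (-c))]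
  · linarith [le_max_right a (-c), le_max_right 1 (max a (-c))]

theorem drift_estimate_general
    (N : ℕ)
    (a₁ α b₁ : Fin N → ℝ) (μ : Fin N → ℝ)
    (hb₁ : ∀ i, 0 < b₁ i)
    (hmean : 0 < ∑ i, μ i * (a₁ i - (α i) ^ 2 / 2)) :
    ∃ ε > (0:ℝ), ∃ r₀ > (0:ℝ),
      0 < ∑ i, μ i * (a₁ i - (α i) ^ 2 / 2 - ε) ∧
      (∀ i, ∀ x > r₀,
        2 * (a₁ i - (α i) ^ 2 / 2 - b₁ i * Real.exp x + (α i) ^ 2 / (2 * x)) * x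
          ≤ -2 * (a₁ i - (α i) ^ 2 / 2 - ε) * |x|) ∧
      (∀ i, ∀ x < -r₀,
        2 * (a₁ i - (α i) ^ 2 / 2 - b₁ i * Real.exp x + (α i) ^ 2 / (2 * x)) * x
          ≤ -2 * (a₁ i - (α i) ^ 2 / 2 - ε) * |x|) := by
  obtain ⟨ε, hε, hsum⟩ :=
    univ.exists_pos_sum_mul_sub_pos μ (fun i => a₁ i - (α i) ^ 2 / 2) hmean
  obtain ⟨r₀, hr₀, htop, hbot⟩ := exists_pos_forall_of_eventually_atTop_atBot
    (eventually_all.2 fun i => eventually_logisticDrift_le_atTop _ (α i) ε (hb₁ i))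
    (eventually_all.2 fun i => eventually_logisticDrift_le_atBot _ (α i) ε hε)
  exact ⟨ε, hε, r₀, hr₀, hsum, fun i x hx => htop x hx i, fun i x hx => hbot x hx i⟩

/-- Asymptotic drift estimate used to build the Lyapunov function for the
log-transformed regime-switching logistic process. -/
theorem drift_estimate
    (N : ℕ) (hN : 0 < N)
    (a₁ α b₁ : Fin N → ℝ) (μ : Fin N → ℝ)
    (ha₁ : ∀ i, 0 < a₁ i) (hb₁ : ∀ i, 0 < b₁ i)
    (hμnonneg : ∀ i, 0 ≤ μ i) (hμsum : ∑ i, μ i = 1)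
    (hmean : 0 < ∑ i, μ i * (a₁ i - (α i) ^ 2 / 2)) :
    ∃ ε > (0:ℝ), ∃ r₀ > (0:ℝ),
      0 < ∑ i, μ i * (a₁ i - (α i) ^ 2 / 2 - ε) ∧
      (∀ i, ∀ x > r₀,
        2 * (a₁ i - (α i) ^ 2 / 2 - b₁ i * Real.exp x + (α i) ^ 2 / (2 * x)) * x
          ≤ -2 * (a₁ i - (α i) ^ 2 / 2 - ε) * |x|) ∧
      (∀ i, ∀ x < -r₀,
        2 * (a₁ i - (α i) ^ 2 / 2 - b₁ i * Real.exp x + (α i) ^ 2 / (2 * x)) * x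
          ≤ -2 * (a₁ i - (α i) ^ 2 / 2 - ε) * |x|) :=
  drift_estimate_general N a₁ α b₁ μ hb₁ hmean
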